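/- For every m ∈ {0,…,δ−1} and every μ ∈ ℂ, there exists z ∈ ℂ with θ_m(z,μ) ≠ 0; in fact ‖θ_m(·,μ)‖²_{L²} = √(τ₂/2)·δ·e^{2πm²τ₂/δ²} > 0, so θ_m(·,μ) is not identically zero. -/

import Mathlib

/-!
Write `r = m/δ`. Then `θ_m(z,μ) = e^{2πir(z+μ)} ϑ(z + μ + rτ, τ)` with `ϑ` Jacobi's theta function,
and for fixed `y = Im z` the function `x ↦ ϑ(x + w, τ)` is an absolutely convergent Fourier series
with coefficients `‖ϑ_k(w, τ)‖ = e^{-πk²τ₂ - 2πk Im w}`. Parseval on `[0, δ]` turns the inner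
integral into `δ` times the sum of their squares. Completing the square, the Gaussian weight makes
the `k`-th term `e^{2πr²τ₂}` times the translate by `kτ₂` of the single Gaussian `e^{-2πy²/τ₂}`, so
the outer integral over one period `[0, τ₂]` equals the integral of that Gaussian over `ℝ`, which
is `√(τ₂/2)`. A positive integral rules out `θ_m(·,μ) ≡ 0`.
-/

open Complex Real

/-- The `μ`-translated theta functions `θ_m(z,μ)`. -/
noncomputable def thetaM2 (τ : ℂ) (δ : ℕ) (m : ℤ) (z μ : ℂ) : ℂ :=
  ∑' k : ℤ, Complex.exp (π * Complex.I * (k : ℂ) ^ 2 * τ) *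
    Complex.exp (2 * π * Complex.I * τ * ((m : ℂ) / (δ : ℂ)) * (k : ℂ)) *
    Complex.exp (2 * π * Complex.I * (((k : ℂ) * (δ : ℂ) + (m : ℂ)) / (δ : ℂ)) * (z + μ))

open MeasureTheory

theorem intervalIntegral_tsum_comp_add_int {E : Type*} [NormedAddCommGroup E] [NormedSpace ℝ E]
    [CompleteSpace E] {f : ℝ → E} (hf : Integrable f) :
    ∫ x in (0:ℝ)..1, ∑' n : ℤ, f (x + n) = ∫ x, f x := by
  rw [intervalIntegral.integral_of_le zero_le_one, ← integral_tsum_of_summable_integral_norm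
    (F := fun (n : ℤ) x => f (x + n)) (fun n => (hf.comp_add_right (n : ℝ)).integrableOn)]
  · simpa only [intervalIntegral.integral_of_le zero_le_one] using
      hf.hasSum_intervalIntegral_comp_add_int.tsum_eq
  · simpa only [intervalIntegral.integral_of_le zero_le_one] using
      hf.norm.hasSum_intervalIntegral_comp_add_int.summable

theorem intervalIntegral_tsum_comp_add_int_mul {E : Type*} [NormedAddCommGroup E]
    [NormedSpace ℝ E] [CompleteSpace E] {f : ℝ → E} (hf : Integrable f) {t : ℝ} (ht : 0 < t) :
    ∫ x in (0:ℝ)..t, ∑' n : ℤ, f (x + n * t) = ∫ x, f x := by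
  have hscale := intervalIntegral.smul_integral_comp_mul_right
    (fun x => ∑' n : ℤ, f (x + n * t)) t (a := 0) (b := 1)
  simp only [zero_mul, one_mul, ← add_mul] at hscale
  rw [← hscale, intervalIntegral_tsum_comp_add_int (hf.comp_mul_right' ht.ne'),
    Measure.integral_comp_mul_right, abs_of_pos (inv_pos.2 ht), smul_smul, mul_inv_cancel₀ ht.ne',
    one_smul]

theorem intervalIntegral_tsum_gaussian_comp_add_int_mul {t : ℝ} (ht : 0 < t) (a : ℝ) :
    ∫ y in (0:ℝ)..t, ∑' k : ℤ, rexp (-(2 * π / t) * (y + k * t + a) ^ 2) = √(t / 2) := by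
  have hb : 0 < 2 * π / t := by positivity
  rw [intervalIntegral_tsum_comp_add_int_mul (f := fun x => rexp (-(2 * π / t) * (x + a) ^ 2))
    ((integrable_exp_neg_mul_sq hb).comp_add_right a) ht,
    integral_add_right_eq_self (fun x => rexp (-(2 * π / t) * x ^ 2)), integral_gaussian]
  congr 1
  field_simp

theorem integral_exp_two_pi_I_int_mul (n : ℕ) (k : ℤ) :
    ∫ x in (0:ℝ)..n, cexp (2 * π * I * k * x) = if k = 0 then (n : ℂ) else 0 := by
  split_ifs with hk
  · simp [hk]
  · have hc : 2 * π * I * k ≠ 0 := by simp [Real.pi_ne_zero, hk]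
    have hperiod : cexp (2 * π * I * k * (n : ℝ)) = 1 := by
      rw [show 2 * π * I * k * ((n : ℝ) : ℂ) = ((k * n : ℤ) : ℂ) * (2 * π * I) by push_cast; ring]
      exact exp_int_mul_two_pi_mul_I _
    rw [integral_exp_mul_complex hc, hperiod]
    simp

theorem norm_exp_two_pi_I_int_mul (k : ℤ) (x : ℝ) : ‖cexp (2 * π * I * k * x)‖ = 1 := by
  rw [show 2 * π * I * k * (x : ℂ) = ((2 * π * k * x : ℝ) : ℂ) * I by push_cast; ring]
  exact norm_exp_ofReal_mul_I _

theorem conj_exp_two_pi_I_int_mul (k : ℤ) (x : ℝ) :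
    (starRingEnd ℂ) (cexp (2 * π * I * k * x)) = cexp (2 * π * I * (-k : ℤ) * x) := by
  rw [← exp_conj]
  congr 1
  simp only [map_mul, map_ofNat, conj_ofReal, conj_I, map_intCast, Int.cast_neg]
  ring

theorem continuous_tsum_mul_exp_two_pi_I {c : ℤ → ℂ} (hc : Summable (‖c ·‖)) :
    Continuous fun x : ℝ => ∑' k : ℤ, c k * cexp (2 * π * I * k * x) :=
  continuous_tsum (fun k => by fun_prop) hc fun k x => by
    rw [norm_mul, norm_exp_two_pi_I_int_mul, mul_one]

theorem integral_tsum_mul_exp_two_pi_I_mul_exp_neg {c : ℤ → ℂ} (hc : Summable (‖c ·‖)) (n : ℕ)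
    (k : ℤ) :
    ∫ x in (0:ℝ)..n, (∑' j : ℤ, c j * cexp (2 * π * I * j * x)) * cexp (2 * π * I * (-k : ℤ) * x)
      = n * c k := by
  have hterm : ∀ (j : ℤ) (x : ℝ), c j * cexp (2 * π * I * j * x) * cexp (2 * π * I * (-k : ℤ) * x)
      = c j * cexp (2 * π * I * (j - k : ℤ) * x) := fun j x => by
    rw [mul_assoc, ← Complex.exp_add]; push_cast; ring_nf
  simp_rw [← tsum_mul_right, hterm, intervalIntegral.integral_of_le (Nat.cast_nonneg n)]
  rw [← integral_tsum_of_summable_integral_norm (fun j => (by fun_prop : Continuous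
    fun x : ℝ => c j * cexp (2 * π * I * (j - k : ℤ) * x)).integrableOn_Ioc)]
  · simp_rw [integral_const_mul, ← intervalIntegral.integral_of_le (Nat.cast_nonneg n),
      integral_exp_two_pi_I_int_mul, sub_eq_zero, mul_ite, mul_zero]
    rw [tsum_ite_eq, mul_comm]
  · simp_rw [norm_mul, norm_exp_two_pi_I_int_mul, mul_one, integral_const, smul_eq_mul]
    exact hc.mul_left _

theorem integral_norm_sq_tsum_mul_exp_two_pi_I {c : ℤ → ℂ} (hc : Summable (‖c ·‖)) (n : ℕ) :
    ∫ x in (0:ℝ)..n, ‖∑' k : ℤ, c k * cexp (2 * π * I * k * x)‖ ^ 2 = n * ∑' k : ℤ, ‖c k‖ ^ 2 := by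
  set S : ℝ → ℂ := fun x => ∑' k : ℤ, c k * cexp (2 * π * I * k * x)
  have hS : Continuous S := continuous_tsum_mul_exp_two_pi_I hc
  have hexpand : ∀ x : ℝ, (‖S x‖ ^ 2 : ℂ)
      = ∑' k : ℤ, (starRingEnd ℂ) (c k) * (S x * cexp (2 * π * I * (-k : ℤ) * x)) := fun x => by
    rw [← mul_conj', conj_tsum, ← tsum_mul_left]
    congr 1; ext k
    rw [map_mul, conj_exp_two_pi_I_int_mul]; ring
  apply Complex.ofReal_injective
  rw [← intervalIntegral.integral_ofReal]
  push_cast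
  change ∫ x in (0:ℝ)..n, (‖S x‖ : ℂ) ^ 2 = _
  simp_rw [hexpand, intervalIntegral.integral_of_le (Nat.cast_nonneg n)]
  rw [← integral_tsum_of_summable_integral_norm]
  · simp only [S]
    simp_rw [integral_const_mul, ← intervalIntegral.integral_of_le (Nat.cast_nonneg n),
      integral_tsum_mul_exp_two_pi_I_mul_exp_neg hc, ← tsum_mul_left]
    congr 1; ext k
    rw [← mul_conj']
    ring
  · exact fun k => (by fun_prop : Continuous fun x : ℝ =>
      (starRingEnd ℂ) (c k) * (S x * cexp (2 * π * I * (-k : ℤ) * x))).integrableOn_Ioc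
  · simp_rw [norm_mul, RCLike.norm_conj, norm_exp_two_pi_I_int_mul, mul_one, integral_const_mul]
    exact hc.mul_right _

theorem jacobiTheta₂_ofReal_add (τ w : ℂ) (x : ℝ) :
    jacobiTheta₂ (x + w) τ = ∑' k : ℤ, jacobiTheta₂_term k w τ * cexp (2 * π * I * k * x) := by
  rw [jacobiTheta₂]
  congr 1; ext k
  rw [jacobiTheta₂_term, jacobiTheta₂_term, ← Complex.exp_add]
  ring_nf

theorem integral_norm_sq_jacobiTheta₂_ofReal_add {τ : ℂ} (hτ : 0 < τ.im) (w : ℂ) (n : ℕ) :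
    ∫ x in (0:ℝ)..n, ‖jacobiTheta₂ (x + w) τ‖ ^ 2
      = n * ∑' k : ℤ, rexp (-2 * π * k ^ 2 * τ.im - 4 * π * k * w.im) := by
  simp_rw [jacobiTheta₂_ofReal_add]
  rw [integral_norm_sq_tsum_mul_exp_two_pi_I ((summable_jacobiTheta₂_term_iff w τ).2 hτ).norm]
  congr 1
  refine tsum_congr fun k => ?_
  rw [norm_jacobiTheta₂_term, ← Real.exp_nat_mul]
  congr 1; push_cast; ring

theorem thetaM2_eq_exp_mul_jacobiTheta₂ (τ : ℂ) {δ : ℕ} (hδ : δ ≠ 0) (m : ℤ) (z μ : ℂ) :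
    thetaM2 τ δ m z μ =
      cexp (2 * π * I * (m / δ) * (z + μ)) * jacobiTheta₂ (z + μ + m / δ * τ) τ := by
  rw [thetaM2, jacobiTheta₂, ← tsum_mul_left]
  congr 1; ext k
  rw [jacobiTheta₂_term, ← Complex.exp_add, ← Complex.exp_add, ← Complex.exp_add]
  congr 1
  field_simp
  ring

theorem norm_sq_thetaM2 (τ : ℂ) {δ : ℕ} (hδ : δ ≠ 0) (m : ℤ) (μ : ℂ) (x y : ℝ) :
    ‖thetaM2 τ δ m (x + y * I) μ‖ ^ 2 = rexp (-4 * π * (m / δ) * (y + μ.im)) *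
      ‖jacobiTheta₂ (x + (y * I + μ + (m / δ : ℝ) * τ)) τ‖ ^ 2 := by
  rw [thetaM2_eq_exp_mul_jacobiTheta₂ τ hδ, norm_mul, mul_pow, Complex.norm_exp,
    ← Real.exp_nat_mul]
  congr 2
  · rw [show (2 * π * I * (m / δ) * (x + y * I + μ) : ℂ)
        = ((2 * π * (m / δ) : ℝ) : ℂ) * (x + y * I + μ) * I by push_cast; ring,
      mul_I_re, im_ofReal_mul]
    simp only [add_im, ofReal_im, mul_im, ofReal_re, I_re, I_im]
    push_cast
    ring
  · push_cast; ring_nf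

theorem integral_weighted_norm_sq_thetaM2 {τ : ℂ} (hτ : 0 < τ.im) {δ : ℕ} (hδ : δ ≠ 0) (m : ℤ)
    (μ : ℂ) (y : ℝ) :
    ∫ x in (0:ℝ)..δ, rexp (-2 * π * (y + μ.im) ^ 2 / τ.im) * ‖thetaM2 τ δ m (x + y * I) μ‖ ^ 2
      = δ * rexp (2 * π * m ^ 2 * τ.im / δ ^ 2) *
        ∑' k : ℤ, rexp (-(2 * π / τ.im) * (y + k * τ.im + (μ.im + m * τ.im / δ)) ^ 2) := by
  simp_rw [norm_sq_thetaM2 τ hδ, intervalIntegral.integral_const_mul,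
    integral_norm_sq_jacobiTheta₂_ofReal_add hτ, ← tsum_mul_left]
  refine tsum_congr fun k => ?_
  have him : (y * I + μ + (m / δ : ℝ) * τ).im = y + μ.im + m / δ * τ.im := by simp
  have hexponent : -4 * π * (m / δ) * (y + μ.im) + -2 * π * (y + μ.im) ^ 2 / τ.im
      + (-2 * π * k ^ 2 * τ.im - 4 * π * k * (y + μ.im + m / δ * τ.im))
      = 2 * π * m ^ 2 * τ.im / δ ^ 2
        + -(2 * π / τ.im) * (y + k * τ.im + (μ.im + m * τ.im / δ)) ^ 2 := by
    field_simp
    ring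
  rw [him, mul_left_comm, ← mul_assoc, ← Real.exp_add, mul_left_comm, ← Real.exp_add, hexponent,
    Real.exp_add, ← mul_assoc]

theorem thetaM2_nonzero_general (τ : ℂ) (hτ : 0 < τ.im) (δ : ℕ) (hδ : 1 ≤ δ)
    (m : ℤ) (μ : ℂ) :
    ((∫ z₂ in (0:ℝ)..τ.im, ∫ z₁ in (0:ℝ)..(δ:ℝ),
        Real.exp (-2 * π * (z₂ + μ.im) ^ 2 / τ.im) *
          ‖thetaM2 τ δ m (z₁ + z₂ * Complex.I) μ‖ ^ 2) =
        Real.sqrt (τ.im / 2) * δ * Real.exp (2 * π * (m : ℝ) ^ 2 * τ.im / (δ : ℝ) ^ 2)) ∧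
    (0 < Real.sqrt (τ.im / 2) * δ * Real.exp (2 * π * (m : ℝ) ^ 2 * τ.im / (δ : ℝ) ^ 2)) ∧
    ∃ z : ℂ, thetaM2 τ δ m z μ ≠ 0 := by
  have hnorm : (∫ z₂ in (0:ℝ)..τ.im, ∫ z₁ in (0:ℝ)..(δ:ℝ),
      rexp (-2 * π * (z₂ + μ.im) ^ 2 / τ.im) * ‖thetaM2 τ δ m (z₁ + z₂ * I) μ‖ ^ 2)
      = √(τ.im / 2) * δ * rexp (2 * π * (m : ℝ) ^ 2 * τ.im / (δ : ℝ) ^ 2) := by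
    simp_rw [integral_weighted_norm_sq_thetaM2 hτ (Nat.one_le_iff_ne_zero.mp hδ),
      intervalIntegral.integral_const_mul, intervalIntegral_tsum_gaussian_comp_add_int_mul hτ]
    ring
  have hpos : 0 < √(τ.im / 2) * δ * rexp (2 * π * (m : ℝ) ^ 2 * τ.im / (δ : ℝ) ^ 2) := by
    have : (0 : ℝ) < δ := by exact_mod_cast hδ
    positivity
  refine ⟨hnorm, hpos, ?_⟩
  by_contra! hzero
  rw [← hnorm] at hpos
  simp [hzero] at hpos

/-- `θ_m(·,μ)` is not identically zero: its squared weighted `L²` norm equals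
`√(τ₂/2)·δ·e^{2πm²τ₂/δ²} > 0`, and there exists `z` with `θ_m(z,μ) ≠ 0`. -/
theorem thetaM2_nonzero (τ : ℂ) (hτ : 0 < τ.im) (δ : ℕ) (hδ : 1 ≤ δ)
    (m : ℤ) (hm0 : 0 ≤ m) (hm : m ≤ (δ : ℤ) - 1) (μ : ℂ) :
    ((∫ z₂ in (0:ℝ)..τ.im, ∫ z₁ in (0:ℝ)..(δ:ℝ),
        Real.exp (-2 * π * (z₂ + μ.im) ^ 2 / τ.im) *
          ‖thetaM2 τ δ m (z₁ + z₂ * Complex.I) μ‖ ^ 2) =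
        Real.sqrt (τ.im / 2) * δ * Real.exp (2 * π * (m : ℝ) ^ 2 * τ.im / (δ : ℝ) ^ 2)) ∧
    (0 < Real.sqrt (τ.im / 2) * δ * Real.exp (2 * π * (m : ℝ) ^ 2 * τ.im / (δ : ℝ) ^ 2)) ∧
    ∃ z : ℂ, thetaM2 τ δ m z μ ≠ 0 :=
  thetaM2_nonzero_general τ hτ δ hδ m μ
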